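/- Let K be a number field, let (𝔟, (t₁, …, tₙ)) be an f-representation, and let μ ∈ K^* be such that ((1/μ)𝔟, (t₁ − log w₁(μ), …, tₙ − log wₙ(μ))) is also an f-representation. Then w(μ) = 1 for every infinite place w of K (including w₀); in particular the two f-representations coincide up to the equivalence 𝔟 ∼ (1/μ)𝔟 and have equal second components. -/

import Mathlib

open NumberField
open scoped nonZeroDivisors

/-- Lexicographic comparison of real tuples: `a ≤ₗₑₓ b`. -/
def lexLe {m : ℕ} (a b : Fin m → ℝ) : Prop :=
  a = b ∨ ∃ i : Fin m, a i < b i ∧ ∀ j : Fin m, j < i → a j = b j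

/-- The vector of absolute values of `h` at the infinite places, the distinguished place `w₀`
first. -/
def absVec {K : Type*} [Field K] [NumberField K] {n : ℕ}
    (w₀ : InfinitePlace K) (w : Fin n → InfinitePlace K) (h : K) : Fin (n + 1) → ℝ :=
  Fin.cons (w₀ h) (fun i => w i h)

/-- The total preorder `≼` on `K^*`: `h ≼ h'` iff the vector of absolute values of `h` is
lexicographically at most that of `h'` (distinguished place first). -/
def preceq {K : Type*} [Field K] [NumberField K] {n : ℕ}
    (w₀ : InfinitePlace K) (w : Fin n → InfinitePlace K) (h h' : K) : Prop :=
  lexLe (absVec w₀ w h) (absVec w₀ w h')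

/-- The box `B(𝔟, (t, ℓ)) = {h ∈ 𝔟 : w₀(h) ≤ exp ℓ and wᵢ(h) ≤ exp tᵢ for 1 ≤ i ≤ n}`. -/
def box {K : Type*} [Field K] [NumberField K] {n : ℕ}
    (w₀ : InfinitePlace K) (w : Fin n → InfinitePlace K)
    (𝔟 : FractionalIdeal (𝓞 K)⁰ K) (t : Fin n → ℝ) (ℓ : ℝ) : Set K :=
  {h : K | h ∈ 𝔟 ∧ w₀ h ≤ Real.exp ℓ ∧ ∀ i : Fin n, w i h ≤ Real.exp (t i)}

/-- A pair `(𝔟, t)` is an *f-representation* if `1 ∈ B(𝔟, (t, 0))` and `1` is a smallest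
element of `B(𝔟, (t, 0)) ∖ {0}` with respect to `≼`. -/
def IsFRep {K : Type*} [Field K] [NumberField K] {n : ℕ}
    (w₀ : InfinitePlace K) (w : Fin n → InfinitePlace K)
    (𝔟 : FractionalIdeal (𝓞 K)⁰ K) (t : Fin n → ℝ) : Prop :=
  (1 : K) ∈ box w₀ w 𝔟 t 0 ∧
  ∀ h ∈ box w₀ w 𝔟 t 0, h ≠ 0 → preceq w₀ w 1 h

/-- Two nonzero fractional ideals are *equivalent* if they differ by a principal ideal whose
generator has absolute value `1` at every infinite place. -/
def EquivIdeal {K : Type*} [Field K] [NumberField K]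
    (𝔟 𝔟' : FractionalIdeal (𝓞 K)⁰ K) : Prop :=
  ∃ h : K, h ≠ 0 ∧ 𝔟 = FractionalIdeal.spanSingleton (𝓞 K)⁰ h * 𝔟' ∧
    ∀ v : InfinitePlace K, v h = 1


/-!
If `(𝔟, t)` and `(μ⁻¹𝔟, t - log w(μ))` are both f-representations, then `μ` lies in the box of
the first whenever `w₀(μ) ≤ 1`, and `μ⁻¹` lies in the box of the second whenever `w₀(μ) ≥ 1`
(the latter because `t ≥ 0`, as `1` lies in the first box). Minimality of `1` then forces
`w₀(μ) = 1`, after which both `1 ≼ μ` and `1 ≼ μ⁻¹` hold, and lexicographic comparison of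
`absVec μ` and its inverse against `1` leaves only `absVec μ = 1`.
-/

open FractionalIdeal

lemma lexLe.apply_zero_le {m : ℕ} {a b : Fin (m + 1) → ℝ} (h : lexLe a b) : a 0 ≤ b 0 := by
  rcases h with rfl | ⟨i, hi, hlt⟩
  · exact le_rfl
  · rcases Fin.eq_zero_or_eq_succ i with rfl | ⟨j, rfl⟩
    · exact hi.le
    · exact (hlt 0 (Fin.succ_pos j)).le

lemma eq_one_of_lexLe_one_of_lexLe_one_inv {m : ℕ} {a : Fin m → ℝ}
    (h : lexLe 1 a) (h' : lexLe 1 a⁻¹) : a = 1 := by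
  rcases h with h | ⟨i, hi, hlt⟩
  · exact h.symm
  rcases h' with h' | ⟨j, hj, hlt'⟩
  · exact inv_eq_one.mp h'.symm
  exfalso
  simp only [Pi.one_apply, Pi.inv_apply] at hi hj hlt hlt'
  rcases lt_trichotomy i j with hij | rfl | hji
  · exact hi.ne (inv_eq_one.mp (hlt' i hij).symm).symm
  · exact (inv_lt_one_of_one_lt₀ hi).not_gt hj
  · exact hj.ne (by rw [← hlt j hji, inv_one])

section Places

variable {K : Type*} [Field K] [NumberField K] {n : ℕ}
  {w₀ : InfinitePlace K} {w : Fin n → InfinitePlace K}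

lemma absVec_one : absVec w₀ w (1 : K) = 1 := by
  ext k
  refine Fin.cases ?_ (fun _ => ?_) k <;> simp [absVec]

lemma absVec_inv (x : K) : absVec w₀ w x⁻¹ = (absVec w₀ w x)⁻¹ := by
  ext k
  refine Fin.cases ?_ (fun _ => ?_) k <;> simp [absVec]

lemma one_preceq_iff {x : K} : preceq w₀ w 1 x ↔ lexLe 1 (absVec w₀ w x) := by
  rw [preceq, absVec_one]

lemma apply_eq_one_of_absVec_eq_one
    (hw : Function.Surjective (Fin.cons w₀ w : Fin (n + 1) → InfinitePlace K))
    {x : K} (hx : absVec w₀ w x = 1) (v : InfinitePlace K) : v x = 1 := by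
  obtain ⟨k, rfl⟩ := hw v
  refine Fin.cases ?_ (fun i => ?_) k
  · simpa [absVec] using congrFun hx 0
  · simpa [absVec] using congrFun hx i.succ

lemma IsFRep.nonneg {𝔟 : FractionalIdeal (𝓞 K)⁰ K} {t : Fin n → ℝ}
    (h : IsFRep w₀ w 𝔟 t) (i : Fin n) : 0 ≤ t i := by
  simpa using h.1.2.2 i

lemma absVec_eq_one_of_isFRep {𝔟 : FractionalIdeal (𝓞 K)⁰ K} {t : Fin n → ℝ}
    {μ : K} (hμ : μ ≠ 0) (h₁ : IsFRep w₀ w 𝔟 t)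
    (h₂ : IsFRep w₀ w (spanSingleton (𝓞 K)⁰ μ⁻¹ * 𝔟) (fun i => t i - Real.log (w i μ))) :
    absVec w₀ w μ = 1 := by
  have hpos (v : InfinitePlace K) : 0 < v μ := InfinitePlace.pos_iff.mpr hμ
  have hμ_mem : μ ∈ 𝔟 := by
    obtain ⟨y, hy, hy1⟩ := mem_singleton_mul.mp h₂.1.1
    rw [eq_inv_mul_iff_mul_eq₀ hμ, mul_one] at hy1
    exact hy1 ▸ hy
  have hμ_le (i : Fin n) : w i μ ≤ Real.exp (t i) := by
    have h := h₂.1.2.2 i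
    rwa [map_one, Real.exp_sub, Real.exp_log (hpos _), one_le_div (hpos _)] at h
  have hμinv_le (i : Fin n) : w i μ⁻¹ ≤ Real.exp (t i - Real.log (w i μ)) := by
    rw [map_inv₀, Real.exp_sub, Real.exp_log (hpos _), inv_eq_one_div]
    gcongr
    exact Real.one_le_exp (h₁.nonneg i)
  have hμ_prec (h : w₀ μ ≤ 1) : lexLe 1 (absVec w₀ w μ) :=
    one_preceq_iff.mp <| h₁.2 μ ⟨hμ_mem, by simpa using h, hμ_le⟩ hμ
  have hμinv_prec (h : 1 ≤ w₀ μ) : lexLe 1 (absVec w₀ w μ)⁻¹ := by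
    rw [← absVec_inv, ← one_preceq_iff]
    refine h₂.2 μ⁻¹ ⟨mem_singleton_mul.mpr ⟨1, h₁.1.1, (mul_one _).symm⟩, ?_, hμinv_le⟩
      (inv_ne_zero hμ)
    simpa using inv_le_one_of_one_le₀ h
  have hw₀ : w₀ μ = 1 := by
    rcases le_total (w₀ μ) 1 with h | h
    · exact h.antisymm (by simpa [absVec] using (hμ_prec h).apply_zero_le)
    · refine h.antisymm' ?_
      have := (hμinv_prec h).apply_zero_le
      simp only [Pi.one_apply, Pi.inv_apply, absVec, Fin.cons_zero] at this
      exact (one_le_inv₀ (hpos w₀)).mp this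
  exact eq_one_of_lexLe_one_of_lexLe_one_inv (hμ_prec hw₀.le) (hμinv_prec hw₀.ge)

lemma equivIdeal_spanSingleton_inv_mul (𝔟 : FractionalIdeal (𝓞 K)⁰ K) {μ : K} (hμ : μ ≠ 0)
    (h : ∀ v : InfinitePlace K, v μ = 1) :
    EquivIdeal 𝔟 (spanSingleton (𝓞 K)⁰ μ⁻¹ * 𝔟) := by
  refine ⟨μ, hμ, ?_, h⟩
  rw [← mul_assoc, spanSingleton_mul_spanSingleton, mul_inv_cancel₀ hμ, spanSingleton_one,
    one_mul]

end Places

theorem stmt13_general {K : Type*} [Field K] [NumberField K] {n : ℕ}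
    (w₀ : InfinitePlace K) (w : Fin n → InfinitePlace K)
    (hw : Function.Bijective (Fin.cons w₀ w : Fin (n + 1) → InfinitePlace K))
    (𝔟 : FractionalIdeal (𝓞 K)⁰ K) (t : Fin n → ℝ)
    (μ : K) (hμ : μ ≠ 0)
    (h1 : IsFRep w₀ w 𝔟 t)
    (h2 : IsFRep w₀ w (FractionalIdeal.spanSingleton (𝓞 K)⁰ μ⁻¹ * 𝔟)
      (fun i => t i - Real.log (w i μ))) :
    (∀ v : InfinitePlace K, v μ = 1) ∧
    EquivIdeal 𝔟 (FractionalIdeal.spanSingleton (𝓞 K)⁰ μ⁻¹ * 𝔟) ∧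
    (fun i => t i - Real.log (w i μ)) = t := by
  have hv : ∀ v : InfinitePlace K, v μ = 1 :=
    apply_eq_one_of_absVec_eq_one hw.2 (absVec_eq_one_of_isFRep hμ h1 h2)
  refine ⟨hv, equivIdeal_spanSingleton_inv_mul 𝔟 hμ hv, ?_⟩
  funext i
  rw [hv (w i), Real.log_one, sub_zero]

/-- **Uniqueness.** Let `K` be a number field with infinite places
`w₀, w₁, …, wₙ`, let `(𝔟, t)` be an f-representation, and `μ ∈ K^*` such that
`((1/μ)𝔟, (tᵢ − log wᵢ(μ))ᵢ)` is also an f-representation. Then `v(μ) = 1` for every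
infinite place `v`; in particular `𝔟 ∼ (1/μ)𝔟` and the second components coincide. -/
theorem stmt13 {K : Type*} [Field K] [NumberField K] {n : ℕ}
    (w₀ : InfinitePlace K) (w : Fin n → InfinitePlace K)
    (hw : Function.Bijective (Fin.cons w₀ w : Fin (n + 1) → InfinitePlace K))
    (𝔟 : FractionalIdeal (𝓞 K)⁰ K) (h𝔟 : 𝔟 ≠ 0) (t : Fin n → ℝ)
    (μ : K) (hμ : μ ≠ 0)
    (h1 : IsFRep w₀ w 𝔟 t)
    (h2 : IsFRep w₀ w (FractionalIdeal.spanSingleton (𝓞 K)⁰ μ⁻¹ * 𝔟)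
      (fun i => t i - Real.log (w i μ))) :
    (∀ v : InfinitePlace K, v μ = 1) ∧
    EquivIdeal 𝔟 (FractionalIdeal.spanSingleton (𝓞 K)⁰ μ⁻¹ * 𝔟) ∧
    (fun i => t i - Real.log (w i μ)) = t :=
  stmt13_general w₀ w hw 𝔟 t μ hμ h1 h2
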